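/- For x, x' ∈ (ℤ/2ℤ)^n, let G_x and G_{x'} be the real 2^n × 2^n matrices with (y,t) entry (−1)^{f_O(y+t, y)} if y + t = x (respectively x') and 0 otherwise, where f_O is the octonion-type twisting function. Then G_x · G_{x'} = − G_{x'} · G_x if and only if f_O(x, x') + f_O(x', x) = 1 in ℤ/2ℤ. -/
import Mathlib


/-- The real sign `(−1)^ε` of an element `ε ∈ ℤ/2ℤ`. -/
def sgn (ε : ZMod 2) : ℝ := if ε = 0 then 1 else -1

/-- The octonion-type twisting function on `(ℤ/2ℤ)^n`. -/
def fO (n : ℕ) (x y : Fin n → ZMod 2) : ZMod 2 :=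
  (∑ k : Fin n, ∑ j ∈ Finset.Iio k, ∑ i ∈ Finset.Iio j,
      (x i * x j * y k + x i * y j * x k + y i * x j * x k)) +
  ∑ j : Fin n, ∑ i ∈ Finset.Iic j, x i * y j

/-- The `2^n × 2^n` real matrix `G_x`, with rows and columns indexed by
`(ℤ/2ℤ)^n`, whose `(y,t)` entry is `(−1)^{f_O(y+t,y)}` if `y + t = x`
and `0` otherwise. -/
def GMat (n : ℕ) (x : Fin n → ZMod 2) :
    Matrix (Fin n → ZMod 2) (Fin n → ZMod 2) ℝ :=
  fun y t => if y + t = x then sgn (fO n (y + t) y) else 0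

lemma twoZ : ∀ c : ZMod 2, c + c = 0 := by decide

lemma two_fun {n : ℕ} (a : Fin n → ZMod 2) : a + a = 0 := by
  funext i; exact twoZ (a i)

lemma cancel {n : ℕ} (a b : Fin n → ZMod 2) : a + (b + a) = b := by
  rw [add_comm b a, ← add_assoc, two_fun, zero_add]

lemma add_left_cancel_char2 {n : ℕ} (a b c : Fin n → ZMod 2) :
    a + b = c ↔ b = a + c := by
  constructor
  · rintro rfl; rw [← add_assoc, two_fun, zero_add]
  · rintro rfl; rw [← add_assoc, two_fun, zero_add]

lemma sgn_zero : sgn 0 = 1 := by simp [sgn]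

lemma zmod2_cases : ∀ c : ZMod 2, c = 0 ∨ c = 1 := by decide

lemma sgn_mul (a b : ZMod 2) : sgn a * sgn b = sgn (a + b) := by
  rcases zmod2_cases a with rfl | rfl <;> rcases zmod2_cases b with rfl | rfl <;>
    simp [sgn, show (1 + 1 : ZMod 2) = 0 by decide,
      show (1 : ZMod 2) ≠ 0 by decide]

lemma sgn_eq_neg_iff (a b : ZMod 2) : sgn a = -sgn b ↔ a + b = 1 := by
  rcases zmod2_cases a with rfl | rfl <;> rcases zmod2_cases b with rfl | rfl <;>
    simp [sgn, show (1 + 1 : ZMod 2) = 0 by decide,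
      show (1 : ZMod 2) ≠ 0 by decide, show (0 : ZMod 2) ≠ 1 by decide] <;> norm_num

lemma fO_zero_right (n : ℕ) (x : Fin n → ZMod 2) : fO n x 0 = 0 := by
  simp [fO]

lemma fO_add_right (n : ℕ) (x y z : Fin n → ZMod 2) :
    fO n x (y + z) = fO n x y + fO n x z := by
  simp only [fO, Pi.add_apply, mul_add, add_mul, Finset.sum_add_distrib]
  ring

lemma GMat_mul_apply (n : ℕ) (x x' y t : Fin n → ZMod 2) :
    (GMat n x * GMat n x') y t =
      if y + t = x + x' then sgn (fO n x y) * sgn (fO n x' (x + y)) else 0 := by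
  rw [Matrix.mul_apply]
  rw [Fintype.sum_eq_single (x + y)]
  · simp only [GMat, cancel, eq_self_iff_true, if_true]
    have hcond : (x + y + t = x') ↔ (y + t = x + x') := by
      rw [add_assoc]; exact add_left_cancel_char2 x (y + t) x'
    by_cases hc : y + t = x + x'
    · have h2 : x + y + t = x' := hcond.mpr hc
      rw [if_pos h2, h2, if_pos hc]
    · rw [if_neg (fun h => hc (hcond.mp h)), if_neg hc, mul_zero]
  · intro z hz
    have : y + z ≠ x := by
      intro h
      exact hz (((add_left_cancel_char2 y z x).mp h).trans (add_comm y x))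
    simp [GMat, this]

/-- The matrices `G_x` and `G_{x'}` anticommute if and only if
`f_O(x,x') + f_O(x',x) = 1`. -/
theorem GMat_anticommute_iff (n : ℕ) (x x' : Fin n → ZMod 2) :
    GMat n x * GMat n x' = -(GMat n x' * GMat n x) ↔
      fO n x x' + fO n x' x = 1 := by
  constructor
  · intro h
    have h2 := congrFun (congrFun h 0) (x + x')
    rw [GMat_mul_apply, Matrix.neg_apply, GMat_mul_apply, zero_add,
      if_pos rfl, if_pos (add_comm x x'), add_zero, add_zero,
      fO_zero_right, fO_zero_right, sgn_zero, one_mul, one_mul] at h2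
    have := (sgn_eq_neg_iff _ _).mp h2
    rw [add_comm] at this
    exact this
  · intro h
    ext y t
    rw [GMat_mul_apply, Matrix.neg_apply, GMat_mul_apply, add_comm x' x]
    by_cases hc : y + t = x + x'
    · rw [if_pos hc, if_pos hc, fO_add_right, fO_add_right, sgn_mul, sgn_mul]
      apply (sgn_eq_neg_iff _ _).mpr
      linear_combination h + twoZ (fO n x y) + twoZ (fO n x' y)
    · rw [if_neg hc, if_neg hc, neg_zero]
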